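/- Consider the stationary Markov chain $\sigma^2_k = (\sigma^2_{k-1} U_k + C)/V_k$ where $U_k \sim \chi^2_p$, $V_k \sim \chi^2_{n+p}$ are all independent and independent of $\sigma^2_{k-1}$, with $\sigma^2_0$ distributed according to the stationary distribution $\mathrm{InverseGamma}(n/2, C/2)$, $n\ge 5$, $C>0$. Then for every $k \ge 0$, $\mathrm{Corr}(\sigma^2_k, \sigma^2_{k+1}) = p/(n+p-2)$. -/

import Mathlib

/-!
Write `Y = (X U + C) / V`. Independence factors every moment of `Y` into moments of `X`, `U` and
`1 / V`, and those of `U`, `V` and `X = 1 / Gamma` are all Gamma moments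
`∫ x ^ t ∂Γ(a, r) = Γ(a + t) / (Γ(a) r ^ t)`. For any square-integrable `X` this gives
`Cov(X, Y) = E[U] E[1 / V] Var X = p / (n + p - 2) · Var X`, while for `X ~ InvGamma(n/2, C/2)`
the first two moments of `Y` are those of `X` (stationarity), so `Var Y = Var X` and the
correlation is `p / (n + p - 2)`.
-/

open MeasureTheory ProbabilityTheory

/-- The chi-squared distribution with `d` degrees of freedom. -/
noncomputable def chiSqMeasure (d : ℕ) : Measure ℝ :=
  gammaMeasure ((d : ℝ) / 2) (1 / 2)

/-- The inverse-gamma distribution with shape `a` and scale `b`: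
the law of `1/X` for `X ~ Gamma(a, rate b)`. -/
noncomputable def invGammaMeasure (a b : ℝ) : Measure ℝ :=
  (gammaMeasure a b).map (fun x => x⁻¹)

/-- Pearson correlation of two real random variables, written via integrals. -/
noncomputable def corrRV {Ω : Type*} [MeasurableSpace Ω] (μ : Measure Ω)
    (X Y : Ω → ℝ) : ℝ :=
  ((∫ ω, X ω * Y ω ∂μ) - (∫ ω, X ω ∂μ) * (∫ ω, Y ω ∂μ)) /
    (Real.sqrt ((∫ ω, X ω ^ 2 ∂μ) - (∫ ω, X ω ∂μ) ^ 2) *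
      Real.sqrt ((∫ ω, Y ω ^ 2 ∂μ) - (∫ ω, Y ω ∂μ) ^ 2))

open Real Set
open scoped ENNReal

section GammaMoments

variable {a r : ℝ}

lemma gammaPDFReal_toNNReal_smul_rpow_ae_eq (ha : 0 < a) (hr : 0 < r) (t : ℝ) :
    (fun x : ℝ => (gammaPDFReal a r x).toNNReal • x ^ t) =ᵐ[volume]
      (Ioi 0).indicator fun x => r ^ a / Gamma a * (x ^ (a + t - 1) * exp (-(r * x))) := by
  filter_upwards [compl_mem_ae_iff.mpr (volume_singleton (a := (0 : ℝ)))] with x hx0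
  rw [NNReal.smul_def, Real.coe_toNNReal _ (gammaPDFReal_nonneg ha hr x), smul_eq_mul]
  rcases lt_or_gt_of_ne (show x ≠ 0 by simpa using hx0) with hx | hx
  · rw [indicator_of_notMem (by simpa using hx.le), gammaPDFReal, if_neg (not_le.mpr hx),
      zero_mul]
  · rw [indicator_of_mem (mem_Ioi.mpr hx), gammaPDFReal, if_pos hx.le, add_sub_right_comm,
      rpow_add hx]
    ring

lemma integral_rpow_gammaMeasure (ha : 0 < a) (hr : 0 < r) {t : ℝ} (hat : 0 < a + t) :
    ∫ x, x ^ t ∂gammaMeasure a r = Gamma (a + t) / Gamma a / r ^ t := by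
  -- `ENNReal.ofReal` is definitionally the coercion of `Real.toNNReal`
  rw [show gammaMeasure a r = volume.withDensity fun x => ((gammaPDFReal a r x).toNNReal : ℝ≥0∞)
      from rfl,
    integral_withDensity_eq_integral_smul (measurable_gammaPDFReal a r).real_toNNReal,
    integral_congr_ae (gammaPDFReal_toNNReal_smul_rpow_ae_eq ha hr t),
    integral_indicator measurableSet_Ioi, integral_const_mul,
    integral_rpow_mul_exp_neg_mul_Ioi hat hr, one_div, inv_rpow hr.le, rpow_add hr]
  have := Gamma_pos_of_pos ha
  have := rpow_pos_of_pos hr a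
  have := rpow_pos_of_pos hr t
  field_simp

lemma integral_id_gammaMeasure (ha : 0 < a) (hr : 0 < r) :
    ∫ x, x ∂gammaMeasure a r = a / r := by
  have h := integral_rpow_gammaMeasure ha hr (t := 1) (by linarith)
  simp only [rpow_one, Gamma_add_one ha.ne'] at h
  rw [h, mul_div_cancel_right₀ _ (Gamma_pos_of_pos ha).ne']

lemma integral_sq_gammaMeasure (ha : 0 < a) (hr : 0 < r) :
    ∫ x, x ^ 2 ∂gammaMeasure a r = a * (a + 1) / r ^ 2 := by
  have h := integral_rpow_gammaMeasure ha hr (t := 2) (by linarith)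
  rw [show a + 2 = a + 1 + 1 by ring, Gamma_add_one (by linarith), Gamma_add_one ha.ne'] at h
  simp only [rpow_two] at h
  have := Gamma_pos_of_pos ha
  rw [h]
  field_simp

lemma integral_inv_gammaMeasure (ha : 1 < a) (hr : 0 < r) :
    ∫ x, x⁻¹ ∂gammaMeasure a r = r / (a - 1) := by
  have h := integral_rpow_gammaMeasure (a := a) (by linarith) hr (t := -1) (by linarith)
  have hΓ : Gamma a = (a - 1) * Gamma (a - 1) := by
    rw [← Gamma_add_one (s := a - 1) (by linarith), sub_add_cancel]
  rw [← sub_eq_add_neg, hΓ] at h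
  simp only [rpow_neg_one] at h
  have := Gamma_pos_of_pos (show 0 < a - 1 by linarith)
  have : a - 1 ≠ 0 := by linarith
  rw [h]
  field_simp

lemma integral_inv_sq_gammaMeasure (ha : 2 < a) (hr : 0 < r) :
    ∫ x, x⁻¹ ^ 2 ∂gammaMeasure a r = r ^ 2 / ((a - 1) * (a - 2)) := by
  have h := integral_rpow_gammaMeasure (a := a) (by linarith) hr (t := -2) (by linarith)
  have hΓ : Gamma a = (a - 1) * ((a - 2) * Gamma (a - 2)) := by
    rw [← Gamma_add_one (s := a - 2) (by linarith), show a - 2 + 1 = a - 1 by ring,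
      ← Gamma_add_one (s := a - 1) (by linarith), sub_add_cancel]
  have e : ∀ x : ℝ, x ^ (-2 : ℝ) = x⁻¹ ^ 2 := fun x => by simp
  rw [← sub_eq_add_neg, hΓ] at h
  simp only [e] at h
  have := Gamma_pos_of_pos (show 0 < a - 2 by linarith)
  have : a - 1 ≠ 0 := by linarith
  have : a - 2 ≠ 0 := by linarith
  rw [h]
  field_simp

end GammaMoments

section Laws

variable {Ω : Type*} [MeasurableSpace Ω] {μ : Measure Ω}

lemma isProbabilityMeasure_chiSqMeasure {d : ℕ} (hd : 0 < d) :
    IsProbabilityMeasure (chiSqMeasure d) :=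
  isProbabilityMeasure_gammaMeasure (by positivity) one_half_pos

lemma isProbabilityMeasure_invGammaMeasure {a b : ℝ} (ha : 0 < a) (hb : 0 < b) :
    IsProbabilityMeasure (invGammaMeasure a b) :=
  have := isProbabilityMeasure_gammaMeasure ha hb
  Measure.isProbabilityMeasure_map measurable_inv.aemeasurable

lemma aemeasurable_of_map_eq {Z : Ω → ℝ} {ν : Measure ℝ} [NeZero ν] (hZ : μ.map Z = ν) :
    AEMeasurable Z μ :=
  aemeasurable_of_map_neZero (hZ ▸ inferInstance)

lemma integral_comp_of_map_eq {Z : Ω → ℝ} {ν : Measure ℝ} [NeZero ν] (hZ : μ.map Z = ν)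
    {g : ℝ → ℝ} (hg : Measurable g) : ∫ ω, g (Z ω) ∂μ = ∫ x, g x ∂ν := by
  rw [← hZ, integral_map (aemeasurable_of_map_eq hZ) hg.aestronglyMeasurable]

variable {U : Ω → ℝ} {d : ℕ}

lemma aemeasurable_of_map_eq_chiSqMeasure (hd : 0 < d) (hU : μ.map U = chiSqMeasure d) :
    AEMeasurable U μ :=
  have := isProbabilityMeasure_chiSqMeasure hd
  aemeasurable_of_map_eq hU

lemma integral_of_map_eq_chiSqMeasure (hd : 0 < d) (hU : μ.map U = chiSqMeasure d) :
    ∫ ω, U ω ∂μ = d := by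
  have := isProbabilityMeasure_chiSqMeasure hd
  rw [integral_comp_of_map_eq (g := fun x => x) hU measurable_id, chiSqMeasure,
    integral_id_gammaMeasure (by positivity) one_half_pos]
  ring

lemma integrable_of_map_eq_chiSqMeasure (hd : 0 < d) (hU : μ.map U = chiSqMeasure d) :
    Integrable U μ :=
  .of_integral_ne_zero (by rw [integral_of_map_eq_chiSqMeasure hd hU]; positivity)

lemma integral_sq_of_map_eq_chiSqMeasure (hd : 0 < d) (hU : μ.map U = chiSqMeasure d) :
    ∫ ω, U ω ^ 2 ∂μ = d * (d + 2) := by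
  have := isProbabilityMeasure_chiSqMeasure hd
  rw [integral_comp_of_map_eq (g := fun x => x ^ 2) hU (measurable_id.pow_const 2), chiSqMeasure,
    integral_sq_gammaMeasure (by positivity) one_half_pos]
  ring

lemma integrable_sq_of_map_eq_chiSqMeasure (hd : 0 < d) (hU : μ.map U = chiSqMeasure d) :
    Integrable (fun ω => U ω ^ 2) μ :=
  .of_integral_ne_zero (by rw [integral_sq_of_map_eq_chiSqMeasure hd hU]; positivity)

lemma integral_inv_of_map_eq_chiSqMeasure (hd : 2 < d) (hU : μ.map U = chiSqMeasure d) :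
    ∫ ω, (U ω)⁻¹ ∂μ = 1 / (d - 2) := by
  have := isProbabilityMeasure_chiSqMeasure (by omega : 0 < d)
  have hd' : (2 : ℝ) < d := by exact_mod_cast hd
  rw [integral_comp_of_map_eq (g := fun x => x⁻¹) hU measurable_inv, chiSqMeasure,
    integral_inv_gammaMeasure (by linarith) one_half_pos]
  field_simp

lemma integral_inv_sq_of_map_eq_chiSqMeasure (hd : 4 < d) (hU : μ.map U = chiSqMeasure d) :
    ∫ ω, (U ω)⁻¹ ^ 2 ∂μ = 1 / ((d - 2) * (d - 4)) := by
  have := isProbabilityMeasure_chiSqMeasure (by omega : 0 < d)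
  have hd' : (4 : ℝ) < d := by exact_mod_cast hd
  rw [integral_comp_of_map_eq (g := fun x => x⁻¹ ^ 2) hU (measurable_inv.pow_const 2),
    chiSqMeasure, integral_inv_sq_gammaMeasure (by linarith) one_half_pos]
  rw [div_eq_div_iff (mul_ne_zero (by linarith) (by linarith))
    (mul_ne_zero (by linarith) (by linarith))]
  ring

variable {X : Ω → ℝ} {a b : ℝ}

lemma integral_invGammaMeasure {g : ℝ → ℝ} (hg : Measurable g) :
    ∫ x, g x ∂invGammaMeasure a b = ∫ x, g x⁻¹ ∂gammaMeasure a b :=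
  integral_map measurable_inv.aemeasurable hg.aestronglyMeasurable

lemma integral_of_map_eq_invGammaMeasure (ha : 1 < a) (hb : 0 < b)
    (hX : μ.map X = invGammaMeasure a b) : ∫ ω, X ω ∂μ = b / (a - 1) := by
  have := isProbabilityMeasure_invGammaMeasure (a := a) (by linarith) hb
  rw [integral_comp_of_map_eq (g := fun x => x) hX measurable_id,
    integral_invGammaMeasure (g := fun x => x) measurable_id, integral_inv_gammaMeasure ha hb]

lemma integral_sq_of_map_eq_invGammaMeasure (ha : 2 < a) (hb : 0 < b)
    (hX : μ.map X = invGammaMeasure a b) :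
    ∫ ω, X ω ^ 2 ∂μ = b ^ 2 / ((a - 1) * (a - 2)) := by
  have := isProbabilityMeasure_invGammaMeasure (a := a) (by linarith) hb
  rw [integral_comp_of_map_eq (g := fun x => x ^ 2) hX (measurable_id.pow_const 2),
    integral_invGammaMeasure (g := fun x => x ^ 2) (measurable_id.pow_const 2),
    integral_inv_sq_gammaMeasure ha hb]

lemma integrable_of_map_eq_invGammaMeasure (ha : 1 < a) (hb : 0 < b)
    (hX : μ.map X = invGammaMeasure a b) : Integrable X μ :=
  .of_integral_ne_zero <| by
    rw [integral_of_map_eq_invGammaMeasure ha hb hX]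
    exact (div_pos hb (by linarith)).ne'

lemma integrable_sq_of_map_eq_invGammaMeasure (ha : 2 < a) (hb : 0 < b)
    (hX : μ.map X = invGammaMeasure a b) : Integrable (fun ω => X ω ^ 2) μ :=
  .of_integral_ne_zero <| by
    rw [integral_sq_of_map_eq_invGammaMeasure ha hb hX]
    exact (div_pos (by positivity) (mul_pos (by linarith) (by linarith))).ne'

lemma integral_sq_sub_sq_of_map_eq_invGammaMeasure (ha : 2 < a) (hb : 0 < b)
    (hX : μ.map X = invGammaMeasure a b) :
    ∫ ω, X ω ^ 2 ∂μ - (∫ ω, X ω ∂μ) ^ 2 = b ^ 2 / ((a - 1) ^ 2 * (a - 2)) := by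
  rw [integral_sq_of_map_eq_invGammaMeasure ha hb hX,
    integral_of_map_eq_invGammaMeasure (by linarith) hb hX]
  have : a - 1 ≠ 0 := by linarith
  have : a - 2 ≠ 0 := by linarith
  field_simp
  ring

end Laws

section ChainStep

variable {Ω : Type*} [MeasurableSpace Ω] {μ : Measure Ω} {X U V : Ω → ℝ} {p m : ℕ}

noncomputable def chainStep (C : ℝ) (X U V : Ω → ℝ) (ω : Ω) : ℝ := (X ω * U ω + C) / V ω

lemma integral_chainStep [IsProbabilityMeasure μ] (C : ℝ) (hp : 0 < p) (hm : 2 < m)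
    (hU : μ.map U = chiSqMeasure p) (hV : μ.map V = chiSqMeasure m) (hX : Integrable X μ)
    (hXU : IndepFun X U μ) (hXUV : IndepFun (fun ω => (X ω, U ω)) V μ) :
    ∫ ω, chainStep C X U V ω ∂μ = (p * ∫ ω, X ω ∂μ + C) / (m - 2) := by
  have hEU := integral_of_map_eq_chiSqMeasure hp hU
  have hUi := integrable_of_map_eq_chiSqMeasure hp hU
  calc ∫ ω, chainStep C X U V ω ∂μ
      = (∫ ω, X ω * U ω + C ∂μ) * ∫ ω, (V ω)⁻¹ ∂μ :=
        hXUV.integral_fun_comp_mul_comp (f := fun q => q.1 * q.2 + C) (g := fun v => v⁻¹)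
          (hX.aemeasurable.prodMk hUi.aemeasurable)
          (aemeasurable_of_map_eq_chiSqMeasure (by omega) hV) (by fun_prop) (by fun_prop)
    _ = ((∫ ω, X ω ∂μ) * p + C) * (1 / (m - 2)) := by
      rw [integral_add (f := fun ω => X ω * U ω) (hXU.integrable_mul hX hUi) (integrable_const C),
        hXU.integral_fun_mul_eq_mul_integral hX.1 hUi.1, hEU,
        integral_inv_of_map_eq_chiSqMeasure hm hV]
      simp
    _ = (p * ∫ ω, X ω ∂μ + C) / (m - 2) := by ring

lemma integral_mul_chainStep (C : ℝ) (hp : 0 < p) (hm : 2 < m)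
    (hU : μ.map U = chiSqMeasure p) (hV : μ.map V = chiSqMeasure m) (hX : Integrable X μ)
    (hX2 : Integrable (fun ω => X ω ^ 2) μ)
    (hXU : IndepFun X U μ) (hXUV : IndepFun (fun ω => (X ω, U ω)) V μ) :
    ∫ ω, X ω * chainStep C X U V ω ∂μ
      = (p * ∫ ω, X ω ^ 2 ∂μ + C * ∫ ω, X ω ∂μ) / (m - 2) := by
  have hEU := integral_of_map_eq_chiSqMeasure hp hU
  have hUi := integrable_of_map_eq_chiSqMeasure hp hU
  have hX2U : IndepFun (fun ω => X ω ^ 2) U μ := hXU.comp (measurable_id.pow_const 2) measurable_id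
  calc ∫ ω, X ω * chainStep C X U V ω ∂μ
      = (∫ ω, X ω * (X ω * U ω + C) ∂μ) * ∫ ω, (V ω)⁻¹ ∂μ := by
        simp_rw [chainStep, div_eq_mul_inv, ← mul_assoc]
        exact hXUV.integral_fun_comp_mul_comp (f := fun q => q.1 * (q.1 * q.2 + C))
          (g := fun v => v⁻¹) (hX.aemeasurable.prodMk hUi.aemeasurable)
          (aemeasurable_of_map_eq_chiSqMeasure (by omega) hV) (by fun_prop) (by fun_prop)
    _ = ((∫ ω, X ω ^ 2 ∂μ) * p + C * ∫ ω, X ω ∂μ) * (1 / (m - 2)) := by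
      simp_rw [show ∀ ω, X ω * (X ω * U ω + C) = X ω ^ 2 * U ω + C * X ω from fun ω => by ring]
      rw [integral_add (f := fun ω => X ω ^ 2 * U ω) (hX2U.integrable_mul hX2 hUi)
          (hX.const_mul C), hX2U.integral_fun_mul_eq_mul_integral hX2.1 hUi.1,
        integral_const_mul, hEU, integral_inv_of_map_eq_chiSqMeasure hm hV]
    _ = (p * ∫ ω, X ω ^ 2 ∂μ + C * ∫ ω, X ω ∂μ) / (m - 2) := by ring

lemma integral_sq_chainStep [IsProbabilityMeasure μ] (C : ℝ) (hp : 0 < p) (hm : 4 < m)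
    (hU : μ.map U = chiSqMeasure p) (hV : μ.map V = chiSqMeasure m) (hX : Integrable X μ)
    (hX2 : Integrable (fun ω => X ω ^ 2) μ)
    (hXU : IndepFun X U μ) (hXUV : IndepFun (fun ω => (X ω, U ω)) V μ) :
    ∫ ω, chainStep C X U V ω ^ 2 ∂μ
      = (p * (p + 2) * ∫ ω, X ω ^ 2 ∂μ + 2 * C * p * ∫ ω, X ω ∂μ + C ^ 2)
        / ((m - 2) * (m - 4)) := by
  have hEU := integral_of_map_eq_chiSqMeasure hp hU
  have hEU2 := integral_sq_of_map_eq_chiSqMeasure hp hU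
  have hUi := integrable_of_map_eq_chiSqMeasure hp hU
  have hU2i := integrable_sq_of_map_eq_chiSqMeasure hp hU
  have hX2U2 : IndepFun (fun ω => X ω ^ 2) (fun ω => U ω ^ 2) μ :=
    hXU.comp (measurable_id.pow_const 2) (measurable_id.pow_const 2)
  calc ∫ ω, chainStep C X U V ω ^ 2 ∂μ
      = (∫ ω, (X ω * U ω + C) ^ 2 ∂μ) * ∫ ω, (V ω)⁻¹ ^ 2 ∂μ := by
        simp_rw [chainStep, div_eq_mul_inv, mul_pow]
        exact hXUV.integral_fun_comp_mul_comp (f := fun q => (q.1 * q.2 + C) ^ 2)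
          (g := fun v => v⁻¹ ^ 2) (hX.aemeasurable.prodMk hUi.aemeasurable)
          (aemeasurable_of_map_eq_chiSqMeasure (by omega) hV) (by fun_prop) (by fun_prop)
    _ = ((∫ ω, X ω ^ 2 ∂μ) * (p * (p + 2)) + 2 * C * ((∫ ω, X ω ∂μ) * p) + C ^ 2)
          * (1 / ((m - 2) * (m - 4))) := by
      simp_rw [show ∀ ω, (X ω * U ω + C) ^ 2 = X ω ^ 2 * U ω ^ 2 + 2 * C * (X ω * U ω) + C ^ 2
        from fun ω => by ring]
      have hXUi : Integrable (fun ω => X ω * U ω) μ := hXU.integrable_mul hX hUi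
      have hX2U2i : Integrable (fun ω => X ω ^ 2 * U ω ^ 2) μ := hX2U2.integrable_mul hX2 hU2i
      rw [integral_add (f := fun ω => X ω ^ 2 * U ω ^ 2 + 2 * C * (X ω * U ω))
          (hX2U2i.add (hXUi.const_mul _)) (integrable_const _),
        integral_add hX2U2i (hXUi.const_mul _),
        hX2U2.integral_fun_mul_eq_mul_integral hX2.1 hU2i.1, integral_const_mul,
        hXU.integral_fun_mul_eq_mul_integral hX.1 hUi.1, hEU, hEU2, integral_const,
        integral_inv_sq_of_map_eq_chiSqMeasure hm hV]
      simp
    _ = _ := by ring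

lemma integral_mul_chainStep_sub_integral_mul [IsProbabilityMeasure μ] (C : ℝ) (hp : 0 < p)
    (hm : 2 < m) (hU : μ.map U = chiSqMeasure p) (hV : μ.map V = chiSqMeasure m)
    (hX : Integrable X μ) (hX2 : Integrable (fun ω => X ω ^ 2) μ)
    (hXU : IndepFun X U μ) (hXUV : IndepFun (fun ω => (X ω, U ω)) V μ) :
    ∫ ω, X ω * chainStep C X U V ω ∂μ - (∫ ω, X ω ∂μ) * ∫ ω, chainStep C X U V ω ∂μ
      = p / (m - 2) * (∫ ω, X ω ^ 2 ∂μ - (∫ ω, X ω ∂μ) ^ 2) := by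
  rw [integral_mul_chainStep C hp hm hU hV hX hX2 hXU hXUV,
    integral_chainStep C hp hm hU hV hX hXU hXUV]
  have : (m : ℝ) - 2 ≠ 0 := by
    have : (2 : ℝ) < m := by exact_mod_cast hm
    linarith
  field_simp
  ring

-- Stationarity of `InvGamma(n/2, C/2)`, seen through the first two moments.
lemma integral_sq_sub_sq_chainStep [IsProbabilityMeasure μ] {n : ℕ} {C : ℝ} (hn : 4 < n)
    (hp : 0 < p) (hC : 0 < C) (hX : μ.map X = invGammaMeasure ((n : ℝ) / 2) (C / 2))
    (hU : μ.map U = chiSqMeasure p) (hV : μ.map V = chiSqMeasure (n + p))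
    (hXU : IndepFun X U μ) (hXUV : IndepFun (fun ω => (X ω, U ω)) V μ) :
    ∫ ω, chainStep C X U V ω ^ 2 ∂μ - (∫ ω, chainStep C X U V ω ∂μ) ^ 2
      = ∫ ω, X ω ^ 2 ∂μ - (∫ ω, X ω ∂μ) ^ 2 := by
  have hn' : (4 : ℝ) < n := by exact_mod_cast hn
  have ha : (2 : ℝ) < n / 2 := by linarith
  have hb : (0 : ℝ) < C / 2 := by linarith
  have hXi := integrable_of_map_eq_invGammaMeasure (by linarith) hb hX
  have hX2i := integrable_sq_of_map_eq_invGammaMeasure ha hb hX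
  rw [integral_sq_chainStep C hp (by omega) hU hV hXi hX2i hXU hXUV,
    integral_chainStep C hp (by omega) hU hV hXi hXU hXUV,
    integral_sq_of_map_eq_invGammaMeasure ha hb hX,
    integral_of_map_eq_invGammaMeasure (by linarith) hb hX,
    show (n : ℝ) / 2 - 1 = (n - 2) / 2 by ring, show (n : ℝ) / 2 - 2 = (n - 4) / 2 by ring]
  have : (n : ℝ) - 2 ≠ 0 := by linarith
  have : (n : ℝ) - 4 ≠ 0 := by linarith
  have : (n : ℝ) + p - 2 ≠ 0 := by linarith
  have : (n : ℝ) + p - 4 ≠ 0 := by linarith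
  push_cast
  field_simp
  ring

end ChainStep

lemma corrRV_eq_of_variance_eq {Ω : Type*} [MeasurableSpace Ω] {μ : Measure Ω} {X Y : Ω → ℝ}
    (h : ∫ ω, Y ω ^ 2 ∂μ - (∫ ω, Y ω ∂μ) ^ 2 = ∫ ω, X ω ^ 2 ∂μ - (∫ ω, X ω ∂μ) ^ 2)
    (hvar : 0 ≤ ∫ ω, X ω ^ 2 ∂μ - (∫ ω, X ω ∂μ) ^ 2) :
    corrRV μ X Y = (∫ ω, X ω * Y ω ∂μ - (∫ ω, X ω ∂μ) * ∫ ω, Y ω ∂μ)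
      / (∫ ω, X ω ^ 2 ∂μ - (∫ ω, X ω ∂μ) ^ 2) := by
  rw [corrRV, h, Real.mul_self_sqrt hvar]

/-- For the stationary chain `σ²_{k+1} = (σ²_k U + C)/V` with
`σ²_k ~ InverseGamma(n/2, C/2)`, `U ~ χ²_p`, `V ~ χ²_{n+p}` mutually independent,
the lag-one autocorrelation is `Corr(σ²_k, σ²_{k+1}) = p/(n+p-2)`. -/
theorem stationary_autocorr_regression
    {Ω : Type*} [MeasurableSpace Ω] (μ : Measure Ω) [IsProbabilityMeasure μ]
    (n p : ℕ) (hn : 5 ≤ n) (hp : 1 ≤ p) (C : ℝ) (hC : 0 < C)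
    (X U V : Ω → ℝ)
    (hX : μ.map X = invGammaMeasure ((n : ℝ) / 2) (C / 2))
    (hU : μ.map U = chiSqMeasure p)
    (hV : μ.map V = chiSqMeasure (n + p))
    (hindep : iIndepFun ![X, U, V] μ) :
    corrRV μ X (fun ω => (X ω * U ω + C) / V ω)
      = (p : ℝ) / ((n : ℝ) + (p : ℝ) - 2) := by
  have ha : (2 : ℝ) < n / 2 := by linarith [show (5 : ℝ) ≤ n by exact_mod_cast hn]
  have hb : (0 : ℝ) < C / 2 := by linarith
  have hXi := integrable_of_map_eq_invGammaMeasure (by linarith) hb hX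
  have hX2i := integrable_sq_of_map_eq_invGammaMeasure ha hb hX
  have hXU : IndepFun X U μ := hindep.indepFun (i := 0) (j := 1) (by decide)
  have hXUV : IndepFun (fun ω => (X ω, U ω)) V μ := by
    have hUm := aemeasurable_of_map_eq_chiSqMeasure (by omega) hU
    have hVm := aemeasurable_of_map_eq_chiSqMeasure (by omega) hV
    exact hindep.indepFun_prodMk₀
      (fun i => by fin_cases i; exacts [hXi.aemeasurable, hUm, hVm]) 0 1 2 (by decide) (by decide)
  have hvar : 0 < ∫ ω, X ω ^ 2 ∂μ - (∫ ω, X ω ∂μ) ^ 2 := by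
    rw [integral_sq_sub_sq_of_map_eq_invGammaMeasure ha hb hX]
    exact div_pos (by positivity) (mul_pos (by nlinarith) (by linarith))
  change corrRV μ X (chainStep C X U V) = _
  rw [corrRV_eq_of_variance_eq
      (integral_sq_sub_sq_chainStep (by omega) (by omega) hC hX hU hV hXU hXUV) hvar.le,
    integral_mul_chainStep_sub_integral_mul C (by omega) (by omega) hU hV hXi hX2i hXU hXUV,
    mul_div_cancel_right₀ _ hvar.ne']
  push_cast
  ring
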